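/- arXiv:2206.11039 — 3 statements merged into one kernel-verified Lean document; each statement's English description precedes it below -/
import Mathlib

section
/- Let $\psi_\infty(q) = e^{-|q|^2/2}$ on $\mathbb{R}^d$ and define $\mathcal{L}g = \psi_\infty^{-1}\operatorname{div}_q(\nabla_q g\, \psi_\infty)$. For any smooth sufficiently decaying $g$, $-\int_{\mathbb{R}^d} (\mathcal{L}g)\, g\, (1+|q|^2)\, \psi_\infty\,dq = \int_{\mathbb{R}^d} (1+|q|^2)|\nabla_q g|^2\psi_\infty\,dq + \int_{\mathbb{R}^d} |q|^2 g^2 \psi_\infty\,dq - d\int_{\mathbb{R}^d} g^2\psi_\infty\,dq$. -/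
open MeasureTheory

namespace Stmt5Aux

variable {d : ℕ}

lemma contDiff_S : ContDiff ℝ (⊤ : ℕ∞) (fun q : Fin d → ℝ => ∑ i, q i ^ 2) :=
  ContDiff.sum fun i _ =>
    ((ContinuousLinearMap.proj i : (Fin d → ℝ) →L[ℝ] ℝ)).contDiff.pow 2

lemma contDiff_psi : ContDiff ℝ (⊤ : ℕ∞) (fun q : Fin d → ℝ => Real.exp (-(∑ i, q i ^ 2) / 2)) :=
  Real.contDiff_exp.comp ((contDiff_S.neg).div_const 2)

lemma hasFDerivAt_S (q : Fin d → ℝ) :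
    HasFDerivAt (fun x : Fin d → ℝ => ∑ i, x i ^ 2)
      (∑ i, (2 * q i) • (ContinuousLinearMap.proj i : (Fin d → ℝ) →L[ℝ] ℝ)) q := by
  apply HasFDerivAt.fun_sum
  intro i _
  have hp := (ContinuousLinearMap.proj i : (Fin d → ℝ) →L[ℝ] ℝ).hasFDerivAt (x := q)
  have := hp.fun_mul hp
  have heq : (fun y : Fin d → ℝ => y i ^ 2) = fun y => y i * y i := by
    funext y; ring
  rw [heq]
  refine this.congr_fderiv ?_
  ext v
  simp [ContinuousLinearMap.proj_apply, two_mul]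
  ring

lemma fderiv_S_single (q : Fin d → ℝ) (i : Fin d) :
    fderiv ℝ (fun x : Fin d → ℝ => ∑ j, x j ^ 2) q (Pi.single i 1) = 2 * q i := by
  rw [(hasFDerivAt_S q).fderiv]
  simp [ContinuousLinearMap.proj_apply, Pi.single_apply, Finset.sum_ite_eq']

lemma hasFDerivAt_half (q : Fin d → ℝ) :
    HasFDerivAt (fun x : Fin d → ℝ => -(∑ j, x j ^ 2) / 2)
      ((-(2⁻¹:ℝ)) • ∑ i, (2 * q i) • (ContinuousLinearMap.proj i : (Fin d → ℝ) →L[ℝ] ℝ)) q := by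
  have h := (hasFDerivAt_S q).const_smul (-(2⁻¹:ℝ))
  have heq : (fun x : Fin d → ℝ => -(∑ j, x j ^ 2) / 2)
      = fun x => (-(2⁻¹:ℝ)) • ∑ j, x j ^ 2 := by
    funext x; simp only [smul_eq_mul]; ring
  rw [heq]; exact h

lemma fderiv_half_single (q : Fin d → ℝ) (i : Fin d) :
    fderiv ℝ (fun x : Fin d → ℝ => -(∑ j, x j ^ 2) / 2) q (Pi.single i 1) = -(q i) := by
  rw [(hasFDerivAt_half q).fderiv]
  simp [ContinuousLinearMap.proj_apply, Pi.single_apply, Finset.sum_ite_eq']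

lemma fderiv_psi_single (q : Fin d → ℝ) (i : Fin d) :
    fderiv ℝ (fun x : Fin d → ℝ => Real.exp (-(∑ j, x j ^ 2) / 2)) q (Pi.single i 1)
      = -(q i) * Real.exp (-(∑ j, q j ^ 2) / 2) := by
  have hd : DifferentiableAt ℝ (fun x : Fin d → ℝ => -(∑ j, x j ^ 2) / 2) q :=
    (hasFDerivAt_half q).differentiableAt
  rw [fderiv_exp hd]
  simp only [ContinuousLinearMap.coe_smul', Pi.smul_apply, fderiv_half_single, smul_eq_mul]
  ring

lemma contDiff_Dg {f : (Fin d → ℝ) → ℝ} (hf : ContDiff ℝ (⊤ : ℕ∞) f) (v : Fin d → ℝ) :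
    ContDiff ℝ (⊤ : ℕ∞) (fun x => fderiv ℝ f x v) :=
  (hf.fderiv_right (by simp)).clm_apply contDiff_const

lemma hcs_Dg {f : (Fin d → ℝ) → ℝ} (hs : HasCompactSupport f) (v : Fin d → ℝ) :
    HasCompactSupport (fun x => fderiv ℝ f x v) :=
  hs.fderiv_apply ℝ v

lemma integ {f : (Fin d → ℝ) → ℝ} (hf : Continuous f) (h : HasCompactSupport f) :
    Integrable f :=
  hf.integrable_of_hasCompactSupport h

lemma ibp {f G : (Fin d → ℝ) → ℝ} (v : Fin d → ℝ)
    (hf : ContDiff ℝ (⊤ : ℕ∞) f) (hG : ContDiff ℝ (⊤ : ℕ∞) G) (hcG : HasCompactSupport G) :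
    ∫ q, f q * fderiv ℝ G q v = -∫ q, fderiv ℝ f q v * G q := by
  apply integral_mul_fderiv_eq_neg_fderiv_mul_of_integrable
  · exact integ ((contDiff_Dg hf v).continuous.mul hG.continuous) hcG.mul_left
  · exact integ (hf.continuous.mul (contDiff_Dg hG v).continuous) (hcs_Dg hcG v).mul_left
  · exact integ (hf.continuous.mul hG.continuous) hcG.mul_left
  · exact fun x _ => hf.differentiable (by simp) x
  · exact fun x _ => hG.differentiable (by simp) x

lemma fderiv_mul_apply {f h : (Fin d → ℝ) → ℝ} (hf : ContDiff ℝ (⊤ : ℕ∞) f) (hh : ContDiff ℝ (⊤ : ℕ∞) h)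
    (q v : Fin d → ℝ) :
    fderiv ℝ (fun x => f x * h x) q v = fderiv ℝ f q v * h q + f q * fderiv ℝ h q v := by
  rw [fderiv_fun_mul (hf.differentiable (by simp) q) (hh.differentiable (by simp) q)]
  simp only [ContinuousLinearMap.add_apply, ContinuousLinearMap.coe_smul', Pi.smul_apply,
    smul_eq_mul]
  ring

lemma fderiv_w_single (q : Fin d → ℝ) (i : Fin d) :
    fderiv ℝ (fun x : Fin d → ℝ => 1 + ∑ j, x j ^ 2) q (Pi.single i 1) = 2 * q i := by
  rw [fderiv_const_add]
  exact fderiv_S_single q i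

lemma fderiv_proj_single (q : Fin d → ℝ) (i : Fin d) :
    fderiv ℝ (fun x : Fin d → ℝ => x i) q (Pi.single i 1) = 1 := by
  have : fderiv ℝ (fun x : Fin d → ℝ => x i) q
      = (ContinuousLinearMap.proj i : (Fin d → ℝ) →L[ℝ] ℝ) :=
    (ContinuousLinearMap.proj i : (Fin d → ℝ) →L[ℝ] ℝ).fderiv
  rw [this]
  simp


lemma hcs_aux {α : Type*} [TopologicalSpace α] {f u : α → ℝ} (h : HasCompactSupport f)
    (hfu : ∀ q, f q = 0 → u q = 0) : HasCompactSupport u := by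
  apply h.mono'
  intro q hq
  apply subset_closure
  simp only [Function.mem_support] at hq ⊢
  intro h0
  exact hq (hfu q h0)

end Stmt5Aux
open Stmt5Aux

/-- Equation (3.8): weighted energy identity for the Ornstein-Uhlenbeck operator
`𝓛 g = ψ∞⁻¹ div_q (∇_q g ψ∞)` with Gaussian weight `ψ∞ q = exp (-|q|²/2)`. -/
theorem stmt_5 (d : ℕ) (g : (Fin d → ℝ) → ℝ)
    (hg : ContDiff ℝ (⊤ : ℕ∞) g) (hsupp : HasCompactSupport g) :
    let ψ : (Fin d → ℝ) → ℝ := fun q => Real.exp (-(∑ i, q i ^ 2) / 2);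
    let Lg : (Fin d → ℝ) → ℝ := fun q => (ψ q)⁻¹ *
      ∑ i, fderiv ℝ (fun x => fderiv ℝ g x (Pi.single i 1) * ψ x) q (Pi.single i 1);
    -(∫ q, Lg q * g q * (1 + ∑ i, q i ^ 2) * ψ q)
      = (∫ q, (1 + ∑ i, q i ^ 2) * (∑ i, (fderiv ℝ g q (Pi.single i 1)) ^ 2) * ψ q)
        + (∫ q, (∑ i, q i ^ 2) * g q ^ 2 * ψ q)
        - d * (∫ q, g q ^ 2 * ψ q) := by
  intro ψ Lg
  have hψdef : ψ = fun q => Real.exp (-(∑ i, q i ^ 2) / 2) := rfl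
  have hLgdef : Lg = fun q => (ψ q)⁻¹ *
      ∑ i, fderiv ℝ (fun x => fderiv ℝ g x (Pi.single i 1) * ψ x) q (Pi.single i 1) := rfl
  -- basic regularity facts
  have hψc : ContDiff ℝ (⊤ : ℕ∞) ψ := contDiff_psi
  have hψcont : Continuous ψ := hψc.continuous
  have hψne : ∀ q, ψ q ≠ 0 := fun q => (Real.exp_pos _).ne'
  have hwc : ContDiff ℝ (⊤ : ℕ∞) (fun q : Fin d → ℝ => 1 + ∑ j, q j ^ 2) :=
    contDiff_const.add contDiff_S
  have hgcont : Continuous g := hg.continuous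
  have hDg : ∀ i : Fin d, ContDiff ℝ (⊤ : ℕ∞) (fun x => fderiv ℝ g x (Pi.single i 1)) :=
    fun i => contDiff_Dg hg _
  have hDgcont : ∀ i : Fin d, Continuous (fun x => fderiv ℝ g x (Pi.single i 1)) :=
    fun i => (hDg i).continuous
  have hDgcs : ∀ i : Fin d, HasCompactSupport (fun x => fderiv ℝ g x (Pi.single i 1)) :=
    fun i => hcs_Dg hsupp _
  have hF : ∀ i : Fin d, ContDiff ℝ (⊤ : ℕ∞) (fun x => fderiv ℝ g x (Pi.single i 1) * ψ x) :=
    fun i => (hDg i).mul hψc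
  have hFc : ∀ i : Fin d, HasCompactSupport (fun x => fderiv ℝ g x (Pi.single i 1) * ψ x) :=
    fun i => (hDgcs i).mul_right
  have hDF : ∀ i : Fin d,
      Continuous (fun q => fderiv ℝ (fun x => fderiv ℝ g x (Pi.single i 1) * ψ x) q
        (Pi.single i 1)) := fun i => (contDiff_Dg (hF i) _).continuous
  have hgw : ContDiff ℝ (⊤ : ℕ∞) (fun q : Fin d → ℝ => g q * (1 + ∑ j, q j ^ 2)) :=
    hg.mul hwc
  have hgwc : HasCompactSupport (fun q : Fin d → ℝ => g q * (1 + ∑ j, q j ^ 2)) :=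
    hsupp.mul_right
  -- Step A: unfold Lg and pull the sum out of the integral
  have hA : ∫ q, Lg q * g q * (1 + ∑ i, q i ^ 2) * ψ q
      = ∑ i, ∫ q, (g q * (1 + ∑ j, q j ^ 2)) *
          fderiv ℝ (fun x => fderiv ℝ g x (Pi.single i 1) * ψ x) q (Pi.single i 1) := by
    rw [← integral_finset_sum]
    · apply integral_congr_ae
      filter_upwards with q
      rw [hLgdef]
      simp only
      rw [Finset.mul_sum, Finset.sum_mul, Finset.sum_mul, Finset.sum_mul]
      apply Finset.sum_congr rfl
      intro i _
      field_simp [hψne q]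
    · intro i _
      exact integ ((hgcont.mul hwc.continuous).mul (hDF i))
        (hcs_aux hsupp (fun q h => by simp [h]))
  -- Step B: integrate by parts in direction i
  have hB : ∀ i : Fin d, ∫ q, (g q * (1 + ∑ j, q j ^ 2)) *
        fderiv ℝ (fun x => fderiv ℝ g x (Pi.single i 1) * ψ x) q (Pi.single i 1)
      = -∫ q, (fderiv ℝ g q (Pi.single i 1) * (1 + ∑ j, q j ^ 2) + g q * (2 * q i)) *
          (fderiv ℝ g q (Pi.single i 1) * ψ q) := by
    intro i
    rw [ibp _ hgw (hF i) (hFc i)]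
    congr 1
    apply integral_congr_ae
    filter_upwards with q
    rw [fderiv_mul_apply hg hwc, fderiv_w_single, hψdef]
  -- Step C: split the integrand
  have hC : ∀ i : Fin d, ∫ q, (fderiv ℝ g q (Pi.single i 1) * (1 + ∑ j, q j ^ 2)
          + g q * (2 * q i)) * (fderiv ℝ g q (Pi.single i 1) * ψ q)
      = (∫ q, (1 + ∑ j, q j ^ 2) * fderiv ℝ g q (Pi.single i 1) ^ 2 * ψ q)
        + ∫ q, (q i * ψ q) * fderiv ℝ (fun x => g x * g x) q (Pi.single i 1) := by
    intro i
    rw [← integral_add]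
    · apply integral_congr_ae
      filter_upwards with q
      rw [fderiv_mul_apply hg hg]
      ring
    · exact integ ((hwc.continuous.mul ((hDgcont i).pow 2)).mul hψcont)
        (hcs_aux (hDgcs i) (fun q h => by simp [h]))
    · exact integ (((continuous_apply i).mul hψcont).mul
        ((contDiff_Dg (hg.mul hg) _).continuous))
        (hcs_aux hsupp (fun q h => by
          have : fderiv ℝ (fun x => g x * g x) q (Pi.single i 1)
              = fderiv ℝ g q (Pi.single i 1) * g q + g q * fderiv ℝ g q (Pi.single i 1) :=
            fderiv_mul_apply hg hg q _
          simp [this, h]))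
  -- Step D: second integration by parts
  have hD : ∀ i : Fin d, ∫ q, (q i * ψ q) * fderiv ℝ (fun x => g x * g x) q (Pi.single i 1)
      = (∫ q, q i ^ 2 * g q ^ 2 * ψ q) - ∫ q, g q ^ 2 * ψ q := by
    intro i
    have hproj : ContDiff ℝ (⊤ : ℕ∞) (fun x : Fin d → ℝ => x i) :=
      (ContinuousLinearMap.proj i : (Fin d → ℝ) →L[ℝ] ℝ).contDiff
    rw [ibp _ (hproj.mul hψc) (hg.mul hg) hsupp.mul_right, ← integral_sub]
    · rw [← integral_neg]
      apply integral_congr_ae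
      filter_upwards with q
      rw [fderiv_mul_apply hproj hψc, fderiv_proj_single, hψdef, fderiv_psi_single]
      ring
    · exact integ ((((continuous_apply i).pow 2).mul (hgcont.pow 2)).mul hψcont)
        (hcs_aux hsupp (fun q h => by simp [h]))
    · exact integ ((hgcont.pow 2).mul hψcont) (hcs_aux hsupp (fun q h => by simp [h]))
  -- rewrite the right-hand side integrals as sums
  have hR1 : ∫ q, (1 + ∑ i, q i ^ 2) * (∑ i, (fderiv ℝ g q (Pi.single i 1)) ^ 2) * ψ q
      = ∑ i, ∫ q, (1 + ∑ j, q j ^ 2) * fderiv ℝ g q (Pi.single i 1) ^ 2 * ψ q := by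
    rw [← integral_finset_sum]
    · apply integral_congr_ae
      filter_upwards with q
      rw [Finset.mul_sum, Finset.sum_mul]
    · intro i _
      exact integ ((hwc.continuous.mul ((hDgcont i).pow 2)).mul hψcont)
        (hcs_aux (hDgcs i) (fun q h => by simp [h]))
  have hR2 : ∫ q, (∑ i, q i ^ 2) * g q ^ 2 * ψ q
      = ∑ i, ∫ q, q i ^ 2 * g q ^ 2 * ψ q := by
    rw [← integral_finset_sum]
    · apply integral_congr_ae
      filter_upwards with q
      rw [Finset.sum_mul, Finset.sum_mul]
    · intro i _
      exact integ ((((continuous_apply i).pow 2).mul (hgcont.pow 2)).mul hψcont)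
        (hcs_aux hsupp (fun q h => by simp [h]))
  -- assemble
  rw [hA, hR1, hR2]
  rw [Finset.sum_congr rfl (fun i _ => by rw [hB i, hC i, hD i])]
  rw [Finset.sum_neg_distrib]
  simp only [neg_neg]
  rw [Finset.sum_add_distrib, Finset.sum_sub_distrib, Finset.sum_const, Finset.card_univ,
    Fintype.card_fin, nsmul_eq_mul]
  ring
end

section
/- Let $\psi_\infty(q) = e^{-|q|^2/2}$ on $\mathbb{R}^d$, $\Omega$ an antisymmetric constant $d \times d$ matrix, and $g$ smooth and sufficiently decaying. Then $\int_{\mathbb{R}^d} \nabla_q\big(\psi_\infty^{-1} \operatorname{div}_q(\Omega q\, g\, \psi_\infty)\big) \cdot \nabla_q g\, \psi_\infty\,dq = 0$. -/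
open MeasureTheory

/- ### Auxiliary material -/

private lemma antisym_quad {d : ℕ} {Ω : Matrix (Fin d) (Fin d) ℝ} (hΩ : Ω.transpose = -Ω)
    (u : Fin d → ℝ) : ∑ i, ∑ k, Ω i k * u k * u i = 0 := by
  have h : ∀ i k, Ω k i = -Ω i k := by
    intro i k
    have := congrFun (congrFun hΩ i) k
    simpa [Matrix.transpose_apply] using this
  have h2 : (∑ i, ∑ k, Ω i k * u k * u i) = -∑ i, ∑ k, Ω i k * u k * u i := by
    calc (∑ i, ∑ k, Ω i k * u k * u i) = ∑ k, ∑ i, Ω i k * u k * u i := Finset.sum_comm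
    _ = ∑ k, ∑ i, -(Ω k i * u i * u k) := by
        refine Finset.sum_congr rfl fun k _ => Finset.sum_congr rfl fun i _ => ?_
        rw [h k i]; ring
    _ = -∑ i, ∑ k, Ω i k * u k * u i := by
        rw [← Finset.sum_neg_distrib]
        refine Finset.sum_congr rfl fun k _ => ?_
        rw [← Finset.sum_neg_distrib]
  linarith

private lemma integrable_fderiv_apply {N : ℕ} {f : (Fin N → ℝ) → ℝ}
    (hf : ContDiff ℝ 2 f) (hs : HasCompactSupport f) (v : Fin N → ℝ) :
    Integrable (fun x => fderiv ℝ f x v) := by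
  have hc : Continuous fun x => fderiv ℝ f x v :=
    ((hf.fderiv_right (m := 1) (by norm_num)).continuous).clm_apply continuous_const
  have hcs : HasCompactSupport fun x => fderiv ℝ f x v :=
    (hs.fderiv (𝕜 := ℝ)).comp_left (g := fun L : (Fin N → ℝ) →L[ℝ] ℝ => L v) rfl
  exact hc.integrable_of_hasCompactSupport hcs

private lemma integral_fderiv_apply_eq_zero {N : ℕ} {f : (Fin N → ℝ) → ℝ}
    (hf : ContDiff ℝ 2 f) (hs : HasCompactSupport f) (v : Fin N → ℝ) :
    ∫ x, fderiv ℝ f x v = 0 := by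
  have hint := integrable_fderiv_apply hf hs v
  have hintf : Integrable f := hf.continuous.integrable_of_hasCompactSupport hs
  have h := integral_mul_fderiv_eq_neg_fderiv_mul_of_integrable
      (μ := volume) (f := fun _ : Fin N → ℝ => (1:ℝ)) (g := f) (v := v)
      (by simpa using (integrable_zero _ ℝ (volume : Measure (Fin N → ℝ))))
      (by simpa using hint) (by simpa using hintf)
      (fun x _ => differentiableAt_const (1:ℝ))
      (fun x _ => (hf.differentiable (by norm_num)).differentiableAt)
  simpa using h

/- ### Derivative building blocks -/

private noncomputable def pr {d : ℕ} (i : Fin d) : (Fin d → ℝ) →L[ℝ] ℝ :=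
  ContinuousLinearMap.proj i

@[simp] private lemma pr_apply {d : ℕ} (i : Fin d) (x : Fin d → ℝ) : pr i x = x i := rfl

private noncomputable def LA (d : ℕ) (Ω : Matrix (Fin d) (Fin d) ℝ) (i : Fin d) :
    (Fin d → ℝ) →L[ℝ] ℝ :=
  ∑ k, Ω i k • pr k

private lemma hasFDerivAt_LA {d : ℕ} (Ω : Matrix (Fin d) (Fin d) ℝ) (i : Fin d) (q : Fin d → ℝ) :
    HasFDerivAt (fun y : Fin d → ℝ => ∑ k, Ω i k * y k) (LA d Ω i) q :=
  HasFDerivAt.fun_sum fun k _ => (hasFDerivAt_apply (𝕜 := ℝ) k q).const_mul (Ω i k)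

private lemma LA_apply {d : ℕ} (Ω : Matrix (Fin d) (Fin d) ℝ) (i l : Fin d) :
    LA d Ω i (Pi.single l 1) = Ω i l := by
  simp [LA, ContinuousLinearMap.sum_apply, Pi.single_apply, mul_ite, mul_one, mul_zero,
    Finset.sum_ite_eq, Finset.sum_ite_eq']

private noncomputable def Dpsi (d : ℕ) (q : Fin d → ℝ) : (Fin d → ℝ) →L[ℝ] ℝ :=
  Real.exp (-(∑ i, q i ^ 2) / 2) • ((-(1:ℝ)/2) • ∑ i, (q i • pr i + q i • pr i))

private lemma hasFDerivAt_psi {d : ℕ} (q : Fin d → ℝ) :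
    HasFDerivAt (fun x : Fin d → ℝ => Real.exp (-(∑ i, x i ^ 2) / 2)) (Dpsi d q) q := by
  have hS : HasFDerivAt (fun x : Fin d → ℝ => ∑ i, x i * x i)
      (∑ i : Fin d, (q i • pr i + q i • pr i)) q :=
    HasFDerivAt.fun_sum fun i _ => (hasFDerivAt_apply (𝕜 := ℝ) i q).mul (hasFDerivAt_apply (𝕜 := ℝ) i q)
  have hS2 : HasFDerivAt (fun x : Fin d → ℝ => ∑ i, x i ^ 2)
      (∑ i : Fin d, (q i • pr i + q i • pr i)) q := by
    simpa only [pow_two] using hS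
  have hB := hS2.const_mul (-(1:ℝ)/2)
  have heq : (fun x : Fin d → ℝ => (-(1:ℝ)/2) * ∑ i, x i ^ 2)
      = (fun x : Fin d → ℝ => -(∑ i, x i ^ 2) / 2) := by funext x; ring
  rw [heq] at hB
  have := hB.exp
  simpa only [Dpsi] using this

private lemma Dpsi_apply {d : ℕ} (q : Fin d → ℝ) (l : Fin d) :
    Dpsi d q (Pi.single l 1) = -(q l) * Real.exp (-(∑ i, q i ^ 2) / 2) := by
  have : (∑ i : Fin d, (q i • pr i + q i • pr i)) (Pi.single l 1) = 2 * q l := by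
    simp [ContinuousLinearMap.sum_apply, Pi.single_apply, Finset.sum_add_distrib,
      mul_ite, mul_one, mul_zero, Finset.sum_ite_eq, Finset.sum_ite_eq']
    ring
  simp only [Dpsi, ContinuousLinearMap.smul_apply, this, smul_eq_mul]
  ring

private noncomputable def D2 (d : ℕ) (g : (Fin d → ℝ) → ℝ) (i : Fin d) (q : Fin d → ℝ) :
    (Fin d → ℝ) →L[ℝ] ℝ :=
  (fderiv ℝ g q).comp (0 : (Fin d → ℝ) →L[ℝ] (Fin d → ℝ))
    + (fderiv ℝ (fderiv ℝ g) q).flip (Pi.single i 1)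

@[simp] private lemma D2_apply {d : ℕ} (g : (Fin d → ℝ) → ℝ) (i : Fin d) (q v : Fin d → ℝ) :
    D2 d g i q v = fderiv ℝ (fderiv ℝ g) q v (Pi.single i 1) := by
  simp [D2, ContinuousLinearMap.flip_apply]

private lemma hasFDerivAt_D2 {d : ℕ} {g : (Fin d → ℝ) → ℝ}
    (hgdd : Differentiable ℝ (fderiv ℝ g)) (i : Fin d) (q : Fin d → ℝ) :
    HasFDerivAt (fun x => fderiv ℝ g x (Pi.single i 1)) (D2 d g i q) q :=
  (hgdd q).hasFDerivAt.clm_apply (hasFDerivAt_const _ _)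

/- ### phi and W -/

private noncomputable def phi (d : ℕ) (g : (Fin d → ℝ) → ℝ) : (Fin d → ℝ) → ℝ :=
  fun x => (1/2 : ℝ) * ∑ l, (fderiv ℝ g x (Pi.single l 1)) ^ 2

private noncomputable def Dphi (d : ℕ) (g : (Fin d → ℝ) → ℝ) (q : Fin d → ℝ) :
    (Fin d → ℝ) →L[ℝ] ℝ :=
  (1/2 : ℝ) • ∑ l, (fderiv ℝ g q (Pi.single l 1) • D2 d g l q
                    + fderiv ℝ g q (Pi.single l 1) • D2 d g l q)

private lemma hasFDerivAt_phi {d : ℕ} {g : (Fin d → ℝ) → ℝ}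
    (hgdd : Differentiable ℝ (fderiv ℝ g)) (q : Fin d → ℝ) :
    HasFDerivAt (phi d g) (Dphi d g q) q := by
  have h1 : HasFDerivAt
      (fun x => ∑ l, fderiv ℝ g x (Pi.single l 1) * fderiv ℝ g x (Pi.single l 1))
      (∑ l, (fderiv ℝ g q (Pi.single l 1) • D2 d g l q
             + fderiv ℝ g q (Pi.single l 1) • D2 d g l q)) q :=
    HasFDerivAt.fun_sum fun l _ => (hasFDerivAt_D2 hgdd l q).mul (hasFDerivAt_D2 hgdd l q)
  have h2 : HasFDerivAt (fun x => ∑ l, (fderiv ℝ g x (Pi.single l 1)) ^ 2)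
      (∑ l, (fderiv ℝ g q (Pi.single l 1) • D2 d g l q
             + fderiv ℝ g q (Pi.single l 1) • D2 d g l q)) q := by
    simpa only [pow_two] using h1
  have h3 := h2.const_mul (1/2 : ℝ)
  exact h3

private lemma Dphi_apply {d : ℕ} (g : (Fin d → ℝ) → ℝ) (q : Fin d → ℝ) (i : Fin d) :
    Dphi d g q (Pi.single i 1) =
      ∑ l, fderiv ℝ g q (Pi.single l 1)
            * fderiv ℝ (fderiv ℝ g) q (Pi.single i 1) (Pi.single l 1) := by
  simp [Dphi, ContinuousLinearMap.sum_apply, Finset.sum_add_distrib, smul_eq_mul]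
  ring

private noncomputable def Wf (d : ℕ) (Ω : Matrix (Fin d) (Fin d) ℝ) (g : (Fin d → ℝ) → ℝ)
    (i : Fin d) : (Fin d → ℝ) → ℝ :=
  fun x => (∑ k, Ω i k * x k) * phi d g x * Real.exp (-(∑ j, x j ^ 2) / 2)

private lemma hasFDerivAt_Wf {d : ℕ} (Ω : Matrix (Fin d) (Fin d) ℝ) {g : (Fin d → ℝ) → ℝ}
    (hgdd : Differentiable ℝ (fderiv ℝ g)) (i : Fin d) (q : Fin d → ℝ) :
    HasFDerivAt (Wf d Ω g i)
      (((∑ k, Ω i k * q k) * phi d g q) • Dpsi d q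
        + Real.exp (-(∑ j, q j ^ 2) / 2) •
            ((∑ k, Ω i k * q k) • Dphi d g q + phi d g q • LA d Ω i)) q :=
  ((hasFDerivAt_LA Ω i q).mul (hasFDerivAt_phi hgdd q)).mul (hasFDerivAt_psi q)

private lemma Wf_app {d : ℕ} (Ω : Matrix (Fin d) (Fin d) ℝ) {g : (Fin d → ℝ) → ℝ}
    (hgdd : Differentiable ℝ (fderiv ℝ g)) (i : Fin d) (q : Fin d → ℝ) :
    fderiv ℝ (Wf d Ω g i) q (Pi.single i 1) =
      ((∑ k, Ω i k * q k) * phi d g q) * (-(q i) * Real.exp (-(∑ j, q j ^ 2) / 2))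
      + Real.exp (-(∑ j, q j ^ 2) / 2) *
          ((∑ k, Ω i k * q k) *
              (∑ l, fderiv ℝ g q (Pi.single l 1)
                * fderiv ℝ (fderiv ℝ g) q (Pi.single i 1) (Pi.single l 1))
            + phi d g q * Ω i i) := by
  rw [(hasFDerivAt_Wf Ω hgdd i q).fderiv]
  simp only [ContinuousLinearMap.add_apply, ContinuousLinearMap.smul_apply, smul_eq_mul,
    Dpsi_apply, Dphi_apply, LA_apply]

private lemma inner_eq {d : ℕ} {Ω : Matrix (Fin d) (Fin d) ℝ} (hΩ : Ω.transpose = -Ω)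
    {g : (Fin d → ℝ) → ℝ} (hgdiff : Differentiable ℝ g) :
    (fun x : Fin d → ℝ => (Real.exp (-(∑ i, x i ^ 2) / 2))⁻¹ *
      ∑ i, fderiv ℝ (fun y => (∑ k, Ω i k * y k) * g y * Real.exp (-(∑ j, y j ^ 2) / 2)) x
        (Pi.single i 1))
    = fun x => ∑ i, (∑ k, Ω i k * x k) * fderiv ℝ g x (Pi.single i 1) := by
  have hdiag : ∀ i, Ω i i = 0 := by
    intro i
    have := congrFun (congrFun hΩ i) i
    simp only [Matrix.transpose_apply, Matrix.neg_apply] at this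
    linarith
  funext x
  have hterm : ∀ i : Fin d,
      fderiv ℝ (fun y => (∑ k, Ω i k * y k) * g y * Real.exp (-(∑ j, y j ^ 2) / 2)) x
        (Pi.single i 1)
      = ((∑ k, Ω i k * x k) * g x) * (-(x i) * Real.exp (-(∑ j, x j ^ 2) / 2))
        + Real.exp (-(∑ j, x j ^ 2) / 2) *
            ((∑ k, Ω i k * x k) * fderiv ℝ g x (Pi.single i 1) + g x * Ω i i) := by
    intro i
    rw [(((hasFDerivAt_LA Ω i x).fun_mul (hgdiff x).hasFDerivAt).fun_mul (hasFDerivAt_psi x)).fderiv]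
    simp only [ContinuousLinearMap.add_apply, ContinuousLinearMap.smul_apply, smul_eq_mul,
      Dpsi_apply, LA_apply]
  rw [Finset.sum_congr rfl fun i _ => hterm i]
  have c1 : ∑ i, (∑ k, Ω i k * x k) * x i = 0 := by
    have h0 := antisym_quad hΩ x
    calc ∑ i, (∑ k, Ω i k * x k) * x i = ∑ i, ∑ k, Ω i k * x k * x i :=
      Finset.sum_congr rfl fun i _ => Finset.sum_mul _ _ _
    _ = 0 := h0
  have expand : (∑ i, (((∑ k, Ω i k * x k) * g x) * (-(x i) * Real.exp (-(∑ j, x j ^ 2) / 2))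
        + Real.exp (-(∑ j, x j ^ 2) / 2) *
            ((∑ k, Ω i k * x k) * fderiv ℝ g x (Pi.single i 1) + g x * Ω i i)))
      = -(g x * Real.exp (-(∑ j, x j ^ 2) / 2)) * (∑ i, (∑ k, Ω i k * x k) * x i)
        + Real.exp (-(∑ j, x j ^ 2) / 2) *
            (∑ i, (∑ k, Ω i k * x k) * fderiv ℝ g x (Pi.single i 1))
        + (Real.exp (-(∑ j, x j ^ 2) / 2) * g x) * ∑ i, Ω i i := by
    simp only [Finset.mul_sum, ← Finset.sum_add_distrib]
    exact Finset.sum_congr rfl fun i _ => by ring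
  rw [expand, c1, Finset.sum_eq_zero fun i _ => hdiag i, mul_zero, zero_add, mul_zero,
    add_zero, inv_mul_cancel_left₀ (Real.exp_ne_zero _)]

private lemma contDiff_Wf {d : ℕ} (Ω : Matrix (Fin d) (Fin d) ℝ) {g : (Fin d → ℝ) → ℝ}
    (hg3 : ContDiff ℝ 3 g) (i : Fin d) : ContDiff ℝ 2 (Wf d Ω g i) := by
  have hB : ContDiff ℝ 2 (fderiv ℝ g) := hg3.fderiv_right (by norm_num)
  have hφ : ContDiff ℝ 2 (phi d g) := by
    unfold phi
    exact contDiff_const.mul (ContDiff.sum fun l _ =>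
      (hB.clm_apply contDiff_const).pow 2)
  have ha : ContDiff ℝ 2 fun x : Fin d → ℝ => ∑ k, Ω i k * x k :=
    ContDiff.sum fun k _ => contDiff_const.mul (contDiff_apply ℝ ℝ k)
  have hψ : ContDiff ℝ 2 fun x : Fin d → ℝ => Real.exp (-(∑ j, x j ^ 2) / 2) :=
    (((ContDiff.sum fun j (_ : j ∈ Finset.univ) =>
        (contDiff_apply ℝ ℝ (j : Fin d)).pow 2).neg).div_const 2).exp
  exact (ha.mul hφ).mul hψ

private lemma supp_Wf {d : ℕ} (Ω : Matrix (Fin d) (Fin d) ℝ) {g : (Fin d → ℝ) → ℝ}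
    (hsupp : HasCompactSupport g) (i : Fin d) : HasCompactSupport (Wf d Ω g i) := by
  have hφ : HasCompactSupport (phi d g) :=
    (hsupp.fderiv (𝕜 := ℝ)).comp_left
      (g := fun L : (Fin d → ℝ) →L[ℝ] ℝ => (1/2 : ℝ) * ∑ l, (L (Pi.single l 1)) ^ 2)
      (by simp)
  show HasCompactSupport (((fun x : Fin d → ℝ => ∑ k, Ω i k * x k) * phi d g) *
      (fun x : Fin d → ℝ => Real.exp (-(∑ j, x j ^ 2) / 2)))
  exact (HasCompactSupport.mul_left hφ).mul_right

private lemma F_app {d : ℕ} (Ω : Matrix (Fin d) (Fin d) ℝ) {g : (Fin d → ℝ) → ℝ}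
    (hgdd : Differentiable ℝ (fderiv ℝ g)) (q : Fin d → ℝ) (l : Fin d) :
    fderiv ℝ (fun x : Fin d → ℝ => ∑ i, (∑ k, Ω i k * x k) * fderiv ℝ g x (Pi.single i 1)) q
        (Pi.single l 1)
    = ∑ i, ((∑ k, Ω i k * q k) * fderiv ℝ (fderiv ℝ g) q (Pi.single l 1) (Pi.single i 1)
            + fderiv ℝ g q (Pi.single i 1) * Ω i l) := by
  have hF : HasFDerivAt
      (fun x : Fin d → ℝ => ∑ i, (∑ k, Ω i k * x k) * fderiv ℝ g x (Pi.single i 1))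
      (∑ i, ((∑ k, Ω i k * q k) • D2 d g i q
             + fderiv ℝ g q (Pi.single i 1) • LA d Ω i)) q :=
    HasFDerivAt.fun_sum fun i _ => (hasFDerivAt_LA Ω i q).mul (hasFDerivAt_D2 hgdd i q)
  rw [hF.fderiv]
  simp only [ContinuousLinearMap.sum_apply, ContinuousLinearMap.add_apply,
    ContinuousLinearMap.smul_apply, smul_eq_mul, D2_apply, LA_apply]

/-- Equation (3.18): cancellation of the co-rotational term at the level of first
`q`-derivatives, for antisymmetric `Ω` and Gaussian weight `ψ∞ q = exp (-|q|²/2)`. -/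
theorem stmt_6 (d : ℕ) (Ω : Matrix (Fin d) (Fin d) ℝ) (hΩ : Ω.transpose = -Ω)
    (g : (Fin d → ℝ) → ℝ) (hg : ContDiff ℝ (⊤ : ℕ∞) g) (hsupp : HasCompactSupport g) :
    let ψ : (Fin d → ℝ) → ℝ := fun q => Real.exp (-(∑ i, q i ^ 2) / 2);
    let divterm : (Fin d → ℝ) → ℝ := fun x =>
      ∑ i, fderiv ℝ (fun y => (∑ k, Ω i k * y k) * g y * ψ y) x (Pi.single i 1);
    ∫ q, (∑ l, fderiv ℝ (fun x => (ψ x)⁻¹ * divterm x) q (Pi.single l 1)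
            * fderiv ℝ g q (Pi.single l 1)) * ψ q = 0 := by
  intro ψ divterm
  have hgdiff : Differentiable ℝ g := hg.differentiable (by simp)
  have hg3 : ContDiff ℝ 3 g := hg.of_le (by exact WithTop.coe_le_coe.mpr (le_top : (3:ℕ∞) ≤ ⊤))
  have hg2 : ContDiff ℝ 2 g := hg.of_le (by exact WithTop.coe_le_coe.mpr (le_top : (2:ℕ∞) ≤ ⊤))
  have hgdd : Differentiable ℝ (fderiv ℝ g) :=
    (hg3.fderiv_right (m := 2) (by norm_num)).differentiable (by norm_num)
  have hsym : ∀ (q v w : Fin d → ℝ),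
      fderiv ℝ (fderiv ℝ g) q v w = fderiv ℝ (fderiv ℝ g) q w v :=
    fun q v w => (hg2.contDiffAt.isSymmSndFDerivAt (by simp)) v w
  have hdiag : ∀ i, Ω i i = 0 := by
    intro i
    have := congrFun (congrFun hΩ i) i
    simp only [Matrix.transpose_apply, Matrix.neg_apply] at this
    linarith
  have hmain : (fun q : Fin d → ℝ =>
        (∑ l, fderiv ℝ (fun x => (ψ x)⁻¹ * divterm x) q (Pi.single l 1)
          * fderiv ℝ g q (Pi.single l 1)) * ψ q)
      = fun q : Fin d → ℝ => ∑ i, fderiv ℝ (Wf d Ω g i) q (Pi.single i 1) := by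
    funext q
    show (∑ l, fderiv ℝ (fun x : Fin d → ℝ => (Real.exp (-(∑ i, x i ^ 2) / 2))⁻¹ *
          ∑ i, fderiv ℝ (fun y => (∑ k, Ω i k * y k) * g y * Real.exp (-(∑ j, y j ^ 2) / 2)) x
            (Pi.single i 1)) q (Pi.single l 1)
        * fderiv ℝ g q (Pi.single l 1)) * Real.exp (-(∑ i, q i ^ 2) / 2)
      = ∑ i, fderiv ℝ (Wf d Ω g i) q (Pi.single i 1)
    rw [inner_eq hΩ hgdiff]
    simp only [F_app Ω hgdd, Wf_app Ω hgdd]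
    -- algebra
    have c1 : ∑ i, (∑ k, Ω i k * q k) * q i = 0 := by
      have h0 := antisym_quad hΩ q
      calc ∑ i, (∑ k, Ω i k * q k) * q i = ∑ i, ∑ k, Ω i k * q k * q i :=
        Finset.sum_congr rfl fun i _ => Finset.sum_mul _ _ _
      _ = 0 := h0
    have c2 : ∑ l, ∑ i, Ω i l * fderiv ℝ g q (Pi.single i 1) * fderiv ℝ g q (Pi.single l 1)
        = 0 := by
      have hT : (Ω.transpose).transpose = -(Ω.transpose) := by
        rw [Matrix.transpose_transpose, hΩ, neg_neg]
      have := antisym_quad hT (fun l => fderiv ℝ g q (Pi.single l 1))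
      simpa [Matrix.transpose_apply] using this
    have lhs1 : ∀ l, (∑ i, ((∑ k, Ω i k * q k)
            * fderiv ℝ (fderiv ℝ g) q (Pi.single l 1) (Pi.single i 1)
          + fderiv ℝ g q (Pi.single i 1) * Ω i l)) * fderiv ℝ g q (Pi.single l 1)
        = (∑ i, (∑ k, Ω i k * q k) * fderiv ℝ g q (Pi.single l 1)
              * fderiv ℝ (fderiv ℝ g) q (Pi.single l 1) (Pi.single i 1))
          + ∑ i, Ω i l * fderiv ℝ g q (Pi.single i 1) * fderiv ℝ g q (Pi.single l 1) := by
      intro l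
      rw [Finset.sum_mul, ← Finset.sum_add_distrib]
      exact Finset.sum_congr rfl fun i _ => by ring
    simp only [lhs1]
    rw [Finset.sum_add_distrib, c2, add_zero]
    have e3 : (∑ l, ∑ i, (∑ k, Ω i k * q k) * fderiv ℝ g q (Pi.single l 1)
            * fderiv ℝ (fderiv ℝ g) q (Pi.single l 1) (Pi.single i 1))
        = ∑ i, ∑ l, (∑ k, Ω i k * q k) * fderiv ℝ g q (Pi.single l 1)
            * fderiv ℝ (fderiv ℝ g) q (Pi.single i 1) (Pi.single l 1) := by
      rw [Finset.sum_comm]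
      exact Finset.sum_congr rfl fun i _ => Finset.sum_congr rfl fun l _ => by
        rw [hsym q (Pi.single l 1) (Pi.single i 1)]
    have e4 : ∑ i, ((∑ k, Ω i k * q k) * phi d g q
            * (-(q i) * Real.exp (-(∑ j, q j ^ 2) / 2))
          + Real.exp (-(∑ j, q j ^ 2) / 2) * ((∑ k, Ω i k * q k)
              * (∑ l, fderiv ℝ g q (Pi.single l 1)
                  * fderiv ℝ (fderiv ℝ g) q (Pi.single i 1) (Pi.single l 1))
            + phi d g q * Ω i i))
        = -(phi d g q * Real.exp (-(∑ j, q j ^ 2) / 2)) * (∑ i, (∑ k, Ω i k * q k) * q i)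
          + Real.exp (-(∑ j, q j ^ 2) / 2) *
              (∑ i, ∑ l, (∑ k, Ω i k * q k) * fderiv ℝ g q (Pi.single l 1)
                * fderiv ℝ (fderiv ℝ g) q (Pi.single i 1) (Pi.single l 1))
          + (Real.exp (-(∑ j, q j ^ 2) / 2) * phi d g q) * ∑ i, Ω i i := by
      simp only [Finset.mul_sum, ← Finset.sum_add_distrib]
      refine Finset.sum_congr rfl fun i _ => ?_
      have hin : Real.exp (-(∑ j, q j ^ 2) / 2) * (∑ l, (∑ k, Ω i k * q k)
            * (fderiv ℝ g q (Pi.single l 1)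
                * fderiv ℝ (fderiv ℝ g) q (Pi.single i 1) (Pi.single l 1)))
          = ∑ l, Real.exp (-(∑ j, q j ^ 2) / 2) * ((∑ k, Ω i k * q k)
              * fderiv ℝ g q (Pi.single l 1)
              * fderiv ℝ (fderiv ℝ g) q (Pi.single i 1) (Pi.single l 1)) := by
        rw [Finset.mul_sum]
        exact Finset.sum_congr rfl fun l _ => by ring
      rw [mul_add, hin]
      ring
    rw [e4, c1, Finset.sum_eq_zero fun i _ => hdiag i, e3]
    ring
  rw [hmain,
    integral_finset_sum Finset.univ fun i _ =>
      integrable_fderiv_apply (contDiff_Wf Ω hg3 i) (supp_Wf Ω hsupp i) (Pi.single i 1)]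
  exact Finset.sum_eq_zero fun i _ =>
    integral_fderiv_apply_eq_zero (contDiff_Wf Ω hg3 i) (supp_Wf Ω hsupp i) (Pi.single i 1)
end

section
/- Let $d \geq 2$ and suppose $y : [0,\infty) \to [0,\infty)$ is absolutely continuous and satisfies $y'(t) + \frac{C_d}{1+t} y(t) \leq C C_d (1+t)^{-d/2 - 1}(1 + \int_0^t y(s)^2\,ds)$ for constants $C, C_d > 0$ with $C_d > d/2 + 1$, together with the a priori bound $y(t) \leq C_0 \ln^{-3}(e+t)$. Then there exists $C_1$ such that $y(t) \leq C_1 (1+t)^{-d/2}$ for all $t \geq 0$. -/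
/-!
Multiplying the differential inequality by `(1 + t) ^ C_d` and using that the forcing term
`1 + ∫₀ᵗ y²` is nondecreasing gives `(1 + t) ^ (d/2) y(t) ≤ y(0) + A (1 + ∫₀ᵗ y²)` with
`A = C C_d / (C_d - d/2)`. Let `M` bound `(1 + s) ^ (d/2) y(s)` on `[0, t]`. On `[T, t]` one
factor of `y²` is at most `M (1 + s)⁻¹ ≤ e M / (e + s)` and the other at most
`C₀ / log³ (e + s)`; as `1 / ((e + s) log³ (e + s))` has primitive `-1 / (2 log² (e + s))`,
`∫_T^t y² ≤ θ_T M` with `θ_T → 0`. So `M ≤ K + A θ_T M` with `K` independent of `t`, and once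
`A θ_T < 1` this closes the bootstrap: `M ≤ K / (1 - A θ_T)`.
-/

open MeasureTheory Set Filter Topology Real

theorem rpow_mul_le_of_hasDerivAt_add_div_mul_le {y y' g : ℝ → ℝ} {a b p t : ℝ}
    (hpa : p < a) (hb : 0 ≤ b) (ht : 0 ≤ t) (hy0 : 0 ≤ y 0)
    (hg : MonotoneOn g (Icc 0 t)) (hgt : 0 ≤ g t)
    (hderiv : ∀ s ∈ Icc 0 t, HasDerivAt y (y' s) s)
    (hineq : ∀ s ∈ Ico 0 t, y' s + a / (1 + s) * y s ≤ b * (1 + s) ^ (-p - 1) * g s) :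
    (1 + t) ^ p * y t ≤ y 0 + b / (a - p) * g t := by
  set K := b / (a - p) * g t
  have hK : 0 ≤ K := mul_nonneg (div_nonneg hb (sub_pos.2 hpa).le) hgt
  have hpow : ∀ s ∈ Icc 0 t, ∀ r, HasDerivAt (fun s : ℝ => (1 + s) ^ r) (r * (1 + s) ^ (r - 1)) s :=
    fun s hs r => by
      simpa using ((hasDerivAt_id' s).const_add 1).rpow_const (p := r) (Or.inl (by linarith [hs.1]))
  -- Since `g s ≤ g t` on `[0, t]`, `y 0 + K (1 + s) ^ (a - p)` is a supersolution
  -- for `(1 + s) ^ a y s`.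
  have hcomp : (1 + t) ^ a * y t ≤ y 0 + K * (1 + t) ^ (a - p) := by
    refine image_le_of_deriv_right_le_deriv_boundary (f := fun s => (1 + s) ^ a * y s)
      (B := fun s => y 0 + K * (1 + s) ^ (a - p))
      (f' := fun s => a * (1 + s) ^ (a - 1) * y s + (1 + s) ^ a * y' s)
      (B' := fun s => K * ((a - p) * (1 + s) ^ (a - p - 1))) ?_ ?_ ?_ ?_ ?_ ?_ ⟨ht, le_rfl⟩
    · exact fun s hs => ((hpow s hs a).mul (hderiv s hs)).continuousAt.continuousWithinAt
    · exact fun s hs => ((hpow s (Ico_subset_Icc_self hs) a).mul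
        (hderiv s (Ico_subset_Icc_self hs))).hasDerivWithinAt
    · simpa using hK
    · exact fun s hs => (((hpow s hs _).const_mul K).const_add _).continuousAt.continuousWithinAt
    · exact fun s hs =>
        (((hpow s (Ico_subset_Icc_self hs) _).const_mul K).const_add _).hasDerivWithinAt
    · intro s hs
      have hs1 : 0 < 1 + s := by linarith [hs.1]
      have hdiv : (1 + s) ^ a * (a / (1 + s)) = a * (1 + s) ^ (a - 1) := by
        rw [rpow_sub_one hs1.ne']; field_simp
      have hadd : (1 + s) ^ a * (1 + s) ^ (-p - 1) = (1 + s) ^ (a - p - 1) := by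
        rw [← rpow_add hs1]; ring_nf
      calc a * (1 + s) ^ (a - 1) * y s + (1 + s) ^ a * y' s
          = (1 + s) ^ a * (y' s + a / (1 + s) * y s) := by rw [← hdiv]; ring
        _ ≤ (1 + s) ^ a * (b * (1 + s) ^ (-p - 1) * g s) := by gcongr; exact hineq s hs
        _ = b * (1 + s) ^ (a - p - 1) * g s := by rw [← hadd]; ring
        _ ≤ b * (1 + s) ^ (a - p - 1) * g t := by
          gcongr
          exact hg ⟨hs.1, hs.2.le⟩ ⟨ht, le_rfl⟩ hs.2.le
        _ = K * ((a - p) * (1 + s) ^ (a - p - 1)) := by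
          simp only [K]; field_simp [(sub_pos.2 hpa).ne']
  have ht1 : 0 < 1 + t := by linarith
  have hD : 1 ≤ (1 + t) ^ (a - p) := one_le_rpow (by linarith) (sub_pos.2 hpa).le
  have hsplit : (1 + t) ^ a = (1 + t) ^ (a - p) * (1 + t) ^ p := by
    rw [← rpow_add ht1]; ring_nf
  rw [hsplit, mul_assoc] at hcomp
  refine le_of_mul_le_mul_left ?_ (by linarith : (0:ℝ) < (1 + t) ^ (a - p))
  nlinarith

theorem hasDerivAt_neg_inv_two_mul_log_sq {c s : ℝ} (hcs : 1 < c + s) :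
    HasDerivAt (fun u => -(2 * log (c + u) ^ 2)⁻¹) ((c + s) * log (c + s) ^ 3)⁻¹ s := by
  have hlog : 0 < log (c + s) := log_pos hcs
  have h := ((((hasDerivAt_id' s).const_add c).log (by linarith)).fun_pow 2).const_mul 2
  refine (h.fun_inv (by positivity)).neg.congr_deriv ?_
  field_simp
  ring

theorem intervalIntegrable_inv_mul_log_pow_three {c T t : ℝ} (hc : 1 < c) (hT : 0 ≤ T)
    (hTt : T ≤ t) : IntervalIntegrable (fun s => ((c + s) * log (c + s) ^ 3)⁻¹) volume T t :=
  ContinuousOn.intervalIntegrable_of_Icc hTt fun s hs => by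
    have hcs : 1 < c + s := by linarith [hs.1]
    refine ContinuousAt.continuousWithinAt (ContinuousAt.inv₀ (by fun_prop (disch := linarith)) ?_)
    exact (mul_pos (by linarith) (pow_pos (log_pos hcs) 3)).ne'

theorem integral_inv_mul_log_pow_three_le {c T t : ℝ} (hc : 1 < c) (hT : 0 ≤ T) (hTt : T ≤ t) :
    ∫ s in T..t, ((c + s) * log (c + s) ^ 3)⁻¹ ≤ (2 * log (c + T) ^ 2)⁻¹ := by
  have hderiv : ∀ s ∈ uIcc T t,
      HasDerivAt (fun u => -(2 * log (c + u) ^ 2)⁻¹) ((c + s) * log (c + s) ^ 3)⁻¹ s := by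
    intro s hs
    rw [uIcc_of_le hTt] at hs
    exact hasDerivAt_neg_inv_two_mul_log_sq (by linarith [hs.1])
  rw [intervalIntegral.integral_eq_sub_of_hasDerivAt hderiv
    (intervalIntegrable_inv_mul_log_pow_three hc hT hTt)]
  have : 0 ≤ (2 * log (c + t) ^ 2)⁻¹ := by positivity
  linarith

theorem tendsto_div_log_sq_atTop (c k : ℝ) :
    Tendsto (fun T => k / (2 * log (c + T) ^ 2)) atTop (𝓝 0) :=
  tendsto_const_nhds.div_atTop <| (tendsto_const_mul_pow_atTop two_ne_zero two_pos).comp <|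
    tendsto_log_atTop.comp (tendsto_atTop_add_const_left _ c tendsto_id)

theorem inv_one_add_le_exp_one_div {s : ℝ} (hs : 0 ≤ s) : (1 + s)⁻¹ ≤ exp 1 / (exp 1 + s) := by
  have he : 1 < exp 1 := one_lt_exp_iff.2 one_pos
  rw [inv_eq_one_div, div_le_div_iff₀ (by linarith) (by linarith)]
  nlinarith

theorem le_mul_rpow_neg_of_rpow_mul_le {x p u M : ℝ} (hx : 0 < x) (h : x ^ p * u ≤ M) :
    u ≤ M * x ^ (-p) := by
  rwa [rpow_neg hx.le, ← div_eq_mul_inv, le_div_iff₀ (rpow_pos_of_pos hx p), mul_comm]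

theorem integral_sq_le_of_le_rpow_of_le_div_log {y : ℝ → ℝ} {C₀ M p T t : ℝ} (hp : 1 ≤ p)
    (hT : 0 ≤ T) (hTt : T ≤ t) (hyc : ContinuousOn y (Icc T t)) (hy : ∀ s ∈ Icc T t, 0 ≤ y s)
    (hlog : ∀ s ∈ Icc T t, y s ≤ C₀ / log (exp 1 + s) ^ 3)
    (hM : ∀ s ∈ Icc T t, y s ≤ M * (1 + s) ^ (-p)) :
    ∫ s in T..t, y s ^ 2 ≤ C₀ * exp 1 / (2 * log (exp 1 + T) ^ 2) * M := by
  have he : 1 < exp 1 := one_lt_exp_iff.2 one_pos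
  have hTmem : T ∈ Icc T t := ⟨le_rfl, hTt⟩
  have hM0 : 0 ≤ M := nonneg_of_mul_nonneg_left ((hy T hTmem).trans (hM T hTmem))
    (rpow_pos_of_pos (by linarith) _)
  have hC₀ : 0 ≤ C₀ := by
    have hL : 0 < log (exp 1 + T) ^ 3 := pow_pos (log_pos (by linarith)) 3
    simpa [hL.ne'] using mul_nonneg ((hy T hTmem).trans (hlog T hTmem)) hL.le
  have hpoint : ∀ s ∈ Icc T t,
      y s ^ 2 ≤ C₀ * exp 1 * M * ((exp 1 + s) * log (exp 1 + s) ^ 3)⁻¹ := by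
    intro s hs
    have hs0 : 0 ≤ s := hT.trans hs.1
    have hweight : (1 + s) ^ (-p) ≤ exp 1 / (exp 1 + s) := calc
      (1 + s) ^ (-p) ≤ (1 + s) ^ (-1 : ℝ) := rpow_le_rpow_of_exponent_le (by linarith) (by linarith)
      _ ≤ exp 1 / (exp 1 + s) := by rw [rpow_neg_one]; exact inv_one_add_le_exp_one_div hs0
    calc y s ^ 2 = y s * y s := sq _
      _ ≤ C₀ / log (exp 1 + s) ^ 3 * (M * (exp 1 / (exp 1 + s))) :=
        mul_le_mul (hlog s hs) ((hM s hs).trans (by gcongr)) (hy s hs) ((hy s hs).trans (hlog s hs))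
      _ = C₀ * exp 1 * M * ((exp 1 + s) * log (exp 1 + s) ^ 3)⁻¹ := by field_simp
  calc ∫ s in T..t, y s ^ 2
      ≤ ∫ s in T..t, C₀ * exp 1 * M * ((exp 1 + s) * log (exp 1 + s) ^ 3)⁻¹ :=
        intervalIntegral.integral_mono_on hTt ((hyc.pow 2).intervalIntegrable_of_Icc hTt)
          ((intervalIntegrable_inv_mul_log_pow_three he hT hTt).const_mul _) hpoint
    _ = C₀ * exp 1 * M * ∫ s in T..t, ((exp 1 + s) * log (exp 1 + s) ^ 3)⁻¹ :=
        intervalIntegral.integral_const_mul _ _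
    _ ≤ C₀ * exp 1 * M * (2 * log (exp 1 + T) ^ 2)⁻¹ := by
        gcongr
        exact integral_inv_mul_log_pow_three_le he hT hTt
    _ = C₀ * exp 1 / (2 * log (exp 1 + T) ^ 2) * M := by ring

theorem le_div_one_sub_of_le_add_mul_of_forall_le {m : ℝ → ℝ} {a b K θ : ℝ} (hab : a ≤ b)
    (hθ : θ < 1) (hm : ContinuousOn m (Icc a b))
    (h : ∀ M, (∀ s ∈ Icc a b, m s ≤ M) → ∀ s ∈ Icc a b, m s ≤ K + θ * M) :
    ∀ s ∈ Icc a b, m s ≤ K / (1 - θ) := by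
  obtain ⟨s₀, hs₀, hmax⟩ := isCompact_Icc.exists_isMaxOn (nonempty_Icc.2 hab) hm
  have hself := h (m s₀) (fun s hs => hmax hs) s₀ hs₀
  intro s hs
  exact (hmax hs).trans ((le_div_iff₀ (sub_pos.2 hθ)).2 (by linarith))

theorem rpow_mul_le_of_le_add_integral_sq {y : ℝ → ℝ} {p A C₀ T : ℝ} (hp : 1 ≤ p) (hA : 0 ≤ A)
    (hT : 0 ≤ T) (hθ : A * (C₀ * exp 1 / (2 * log (exp 1 + T) ^ 2)) < 1)
    (hyc : ContinuousOn y (Ici 0)) (hy : ∀ t, 0 ≤ t → 0 ≤ y t)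
    (hlog : ∀ t, 0 ≤ t → y t ≤ C₀ / log (exp 1 + t) ^ 3)
    (hdecay : ∀ t, 0 ≤ t → (1 + t) ^ p * y t ≤ y 0 + A * (1 + ∫ s in (0:ℝ)..t, y s ^ 2))
    {t : ℝ} (ht : 0 ≤ t) :
    (1 + t) ^ p * y t ≤ (y 0 + A * (1 + ∫ s in (0:ℝ)..T, y s ^ 2))
      / (1 - A * (C₀ * exp 1 / (2 * log (exp 1 + T) ^ 2))) := by
  set t' := max t T
  have hTt' : T ≤ t' := le_max_right t T
  have hint : ∀ a b, 0 ≤ a → a ≤ b → IntervalIntegrable (fun s => y s ^ 2) volume a b :=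
    fun a b ha hab => ((hyc.pow 2).mono fun s hs => ha.trans hs.1).intervalIntegrable_of_Icc hab
  refine le_div_one_sub_of_le_add_mul_of_forall_le (m := fun s => (1 + s) ^ p * y s)
    (hT.trans hTt') hθ ?_ (fun M hM s hs => ?_) t ⟨ht, le_max_left t T⟩
  · exact (ContinuousOn.rpow_const (by fun_prop) fun s _ => Or.inr (by linarith)).mul
      (hyc.mono fun s hs => hs.1)
  have hyM : ∀ r ∈ Icc T t', y r ≤ M * (1 + r) ^ (-p) := fun r hr =>
    le_mul_rpow_neg_of_rpow_mul_le (by linarith [hr.1]) (hM r ⟨hT.trans hr.1, hr.2⟩)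
  have htail := integral_sq_le_of_le_rpow_of_le_div_log hp hT hTt'
    (hyc.mono fun r hr => hT.trans hr.1) (fun r hr => hy r (hT.trans hr.1))
    (fun r hr => hlog r (hT.trans hr.1)) hyM
  calc (1 + s) ^ p * y s ≤ y 0 + A * (1 + ∫ r in (0:ℝ)..s, y r ^ 2) := hdecay s hs.1
    _ ≤ y 0 + A * (1 + ∫ r in (0:ℝ)..t', y r ^ 2) := by
      gcongr
      exact intervalIntegral.integral_mono_interval le_rfl hs.1 hs.2
        (Eventually.of_forall fun r => sq_nonneg (y r)) (hint 0 t' le_rfl (hs.1.trans hs.2))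
    _ = y 0 + A * (1 + ((∫ r in (0:ℝ)..T, y r ^ 2) + ∫ r in T..t', y r ^ 2)) := by
      rw [intervalIntegral.integral_add_adjacent_intervals (hint 0 T le_rfl hT) (hint T t' hT hTt')]
    _ ≤ y 0 + A * (1 + ((∫ r in (0:ℝ)..T, y r ^ 2) +
          C₀ * exp 1 / (2 * log (exp 1 + T) ^ 2) * M)) := by gcongr
    _ = y 0 + A * (1 + ∫ r in (0:ℝ)..T, y r ^ 2) +
          A * (C₀ * exp 1 / (2 * log (exp 1 + T) ^ 2)) * M := by ring

/-- Bootstrap lemma underlying the optimal decay rate, (5.29)-(5.32) of the paper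
(with `y = ‖u‖_{L²}²`): from `y' + C_d/(1+t) y ≤ C C_d (1+t)^{-d/2-1}(1 + ∫₀ᵗ y²)`
and a logarithmic a priori bound, deduce `y(t) ≤ C₁ (1+t)^{-d/2}`. -/
theorem stmt_15 (d : ℕ) (hd : 2 ≤ d) (C Cd C₀ : ℝ)
    (hC : 0 < C) (hCd : (d : ℝ) / 2 + 1 < Cd)
    (y y' : ℝ → ℝ)
    (hy : ∀ t, 0 ≤ t → 0 ≤ y t)
    (hderiv : ∀ t, 0 ≤ t → HasDerivAt y (y' t) t)
    (hineq : ∀ t, 0 ≤ t →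
      y' t + Cd / (1 + t) * y t
        ≤ C * Cd * (1 + t) ^ (-(d : ℝ)/2 - 1) * (1 + ∫ s in (0:ℝ)..t, (y s) ^ 2))
    (hlog : ∀ t, 0 ≤ t → y t ≤ C₀ / (Real.log (Real.exp 1 + t)) ^ 3) :
    ∃ C₁ : ℝ, 0 < C₁ ∧ ∀ t, 0 ≤ t → y t ≤ C₁ * (1 + t) ^ (-(d : ℝ)/2) := by
  simp only [neg_div] at hineq ⊢
  set A := C * Cd / (Cd - d / 2)
  have hp : 1 ≤ (d : ℝ) / 2 := by
    rw [le_div_iff₀ two_pos, one_mul]; exact_mod_cast hd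
  have hA : 0 < A := div_pos (mul_pos hC (by linarith)) (by linarith)
  have hyc : ContinuousOn y (Ici 0) := fun t ht => (hderiv t ht).continuousAt.continuousWithinAt
  have hF : MonotoneOn (fun t => ∫ s in (0:ℝ)..t, y s ^ 2) (Ici 0) := fun a ha b hb hab =>
    intervalIntegral.integral_mono_interval le_rfl ha hab
      (Eventually.of_forall fun r => sq_nonneg (y r))
      (((hyc.pow 2).mono fun s hs => hs.1).intervalIntegrable_of_Icc hb)
  have hF0 (t : ℝ) (ht : 0 ≤ t) : 0 ≤ ∫ s in (0:ℝ)..t, y s ^ 2 :=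
    intervalIntegral.integral_nonneg ht fun r _ => sq_nonneg (y r)
  have hdecay (t : ℝ) (ht : 0 ≤ t) :
      (1 + t) ^ ((d : ℝ) / 2) * y t ≤ y 0 + A * (1 + ∫ s in (0:ℝ)..t, y s ^ 2) :=
    rpow_mul_le_of_hasDerivAt_add_div_mul_le (by linarith) (mul_pos hC (by linarith)).le ht
      (hy 0 le_rfl) (fun a ha b hb hab => add_le_add_right (hF ha.1 hb.1 hab) 1)
      (by linarith [hF0 t ht]) (fun s hs => hderiv s hs.1) (fun s hs => hineq s hs.1)
  obtain ⟨T, hθ, hT⟩ := ((((tendsto_div_log_sq_atTop (exp 1) (C₀ * exp 1)).const_mul A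
    ).eventually_lt_const (by simp : A * 0 < 1)).and (eventually_ge_atTop 0)).exists
  have hK : 0 < y 0 + A * (1 + ∫ s in (0:ℝ)..T, y s ^ 2) :=
    add_pos_of_nonneg_of_pos (hy 0 le_rfl) (mul_pos hA (by linarith [hF0 T hT]))
  exact ⟨_, div_pos hK (sub_pos.2 hθ), fun t ht => le_mul_rpow_neg_of_rpow_mul_le (by linarith)
    (rpow_mul_le_of_le_add_integral_sq hp hA.le hT hθ hyc hy hlog hdecay ht)⟩
end
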